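/- arXiv:2501.14988 — 3 statements merged into one kernel-verified Lean document; each statement's English description precedes it below -/
import Mathlib

section
/- If κ is a regular cardinal, then every uniform ultrafilter over κ⁺ is κ-decomposable. -/
open Cardinal Set

universe u v

/-- An ultrafilter is uniform if all of its members have full cardinality. -/
def Uniform {α : Type u} (U : Ultrafilter α) : Prop := ∀ X ∈ U, #X = #α

/-- An ultrafilter `U` over `S` is `l`-decomposable if there is `f : S → l`
such that preimages of sets of size `< l` are not in `U`. -/
def Decomposable {S : Type u} (U : Ultrafilter S) (l : Cardinal.{v}) : Prop :=
  ∃ f : S → l.out, ∀ X : Set l.out, #X < l → f ⁻¹' X ∉ U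

/-- The character of an ultrafilter: the least cardinality of a base. -/
noncomputable def charU {α : Type u} (U : Ultrafilter α) : Cardinal.{u} :=
  sInf {c | ∃ B : Set (Set α), #B = c ∧ (∀ X ∈ B, X ∈ U) ∧ ∀ Y ∈ U, ∃ X ∈ B, X ⊆ Y}

/-- The ultrafilter number at a cardinal `κ`: the minimal character of a
uniform ultrafilter over (a set of size) `κ`. -/
noncomputable def uNumber (κ : Cardinal.{u}) : Cardinal.{u} :=
  sInf {c | ∃ U : Ultrafilter κ.out, Uniform U ∧ charU U = c}

/-- If `κ` is regular, every uniform ultrafilter over `κ⁺` is `κ`-decomposable. -/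
theorem stmt5 (κ : Cardinal.{u}) (hκ : κ.IsRegular)
    (U : Ultrafilter (Order.succ κ).out) (hU : Uniform U) :
    Decomposable U κ := by
  classical
  by_contra hdec
  unfold Decomposable at hdec
  push_neg at hdec
  -- hdec : ∀ f : (Order.succ κ).out → κ.out, ∃ X, #X < κ ∧ f ⁻¹' X ∈ U
  have hℵ : ℵ₀ ≤ κ := hκ.aleph0_le
  have hS : #(Order.succ κ).out = Order.succ κ := Cardinal.mk_out _
  have hlim : Order.IsSuccLimit κ.ord := Cardinal.isSuccLimit_ord hℵ
  -- small sets are null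
  have null : ∀ A : Set (Order.succ κ).out, #A ≤ κ → A ∉ U := by
    intro A hA hAU
    have h1 := hU A hAU
    rw [hS] at h1
    exact (Order.lt_succ κ).not_ge (h1 ▸ hA)
  -- κ-side machinery
  let Kt : Type u := κ.ord.ToType
  have hKt : #Kt = κ := by rw [show #Kt = #κ.ord.ToType from rfl, Cardinal.mk_toType, Cardinal.card_ord]
  let σ : Set.Iio κ.ord ≃o Kt := (Ordinal.ToType.mk (o := κ.ord))
  let τ : Kt → Ordinal := fun i => (σ.symm i).1
  have hτlt : ∀ i, τ i < κ.ord := fun i => (σ.symm i).2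
  have hτinj : Function.Injective τ := fun i j h =>
    σ.symm.injective (Subtype.ext h)
  have hτsurj : ∀ ξ < κ.ord, ∃ i, τ i = ξ := by
    intro ξ hξ
    refine ⟨σ ⟨ξ, hξ⟩, ?_⟩
    show ((σ.symm (σ ⟨ξ, hξ⟩)) : Ordinal) = ξ
    rw [OrderIso.symm_apply_apply]
  have hsucclt : ∀ {a : Ordinal}, a < κ.ord → a + 1 < κ.ord := by
    intro a ha
    rw [Ordinal.add_one_eq_succ]
    exact hlim.succ_lt ha
  let ψ : Kt ≃ κ.out := Classical.choice (Cardinal.eq.mp (by rw [hKt, Cardinal.mk_out]))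
  -- T1 : every function (Order.succ κ).out → Kt is bounded mod U
  have T1 : ∀ h : (Order.succ κ).out → Kt, ∃ ξ < κ.ord, {s | τ (h s) < ξ} ∈ U := by
    intro h
    obtain ⟨X, hX, hXU⟩ := hdec (fun s => ψ (h s))
    have hY : #(ψ ⁻¹' X) < κ :=
      lt_of_le_of_lt (Cardinal.mk_preimage_of_injective ψ X ψ.injective) hX
    refine ⟨⨆ i : ↥(ψ ⁻¹' X), τ i.1 + 1, ?_, ?_⟩
    · exact Cardinal.iSup_lt_ord_of_isRegular hκ hY fun i => hsucclt (hτlt _)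
    · refine Filter.mem_of_superset hXU ?_
      intro s hs
      have hmem : h s ∈ ψ ⁻¹' X := hs
      have h1 : τ (h s) + 1 ≤ ⨆ i : ↥(ψ ⁻¹' X), τ i.1 + 1 :=
        Ordinal.le_iSup (fun i : ↥(ψ ⁻¹' X) => τ i.1 + 1) ⟨h s, hmem⟩
      exact lt_of_lt_of_le (lt_add_one (τ (h s))) h1
  -- (Order.succ κ).out-side rank function
  set Λ := (Order.succ κ).ord with hΛdef
  have hΛlim : Order.IsSuccLimit Λ := Cardinal.isSuccLimit_ord (hℵ.trans (Order.lt_succ κ).le)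
  let σ' : Set.Iio Λ ≃o Λ.ToType := (Ordinal.ToType.mk (o := Λ))
  let Φ : (Order.succ κ).out ≃ Λ.ToType :=
    Classical.choice (Cardinal.eq.mp (by rw [hS, Cardinal.mk_toType, hΛdef, Cardinal.card_ord]))
  let ρ : (Order.succ κ).out → Ordinal := fun s => (σ'.symm (Φ s)).1
  have hρlt : ∀ s, ρ s < Λ := fun s => (σ'.symm (Φ s)).2
  have hρinj : Function.Injective ρ := by
    intro s t h
    exact Φ.injective (σ'.symm.injective (Subtype.ext h))
  have seg : ∀ β : (Order.succ κ).out, #{t : (Order.succ κ).out | ρ t ≤ ρ β} ≤ κ := by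
    intro β
    have h1 : ρ β + 1 < Λ := by
      rw [Ordinal.add_one_eq_succ]; exact hΛlim.succ_lt (hρlt β)
    have hlt : ∀ t : ↥{t : (Order.succ κ).out | ρ t ≤ ρ β}, ρ t.1 < ρ β + 1 := by
      intro t
      exact lt_of_le_of_lt t.2 (lt_add_one _)
    have hinj : Function.Injective
        (fun t : ↥{t : (Order.succ κ).out | ρ t ≤ ρ β} =>
          (Ordinal.ToType.mk (o := ρ β + 1)) ⟨ρ t.1, hlt t⟩) := by
      intro t t' ht
      have h2 := ((Ordinal.ToType.mk (o := ρ β + 1))).injective ht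
      have h3 := congrArg Subtype.val h2
      exact Subtype.ext (hρinj h3)
    have h5 : #{t : (Order.succ κ).out | ρ t ≤ ρ β} ≤ #(ρ β + 1).ToType := Cardinal.mk_le_of_injective hinj
    rw [Cardinal.mk_toType] at h5
    have h6 : (ρ β + 1).card < Order.succ κ := Cardinal.lt_ord.mp h1
    exact h5.trans (Order.lt_succ_iff.mp h6)
  -- injections of initial segments into Kt
  have eex : ∀ s : (Order.succ κ).out, ∃ e : ↥{t : (Order.succ κ).out | ρ t < ρ s} → Kt, Function.Injective e := by
    intro s
    have h1 : #{t : (Order.succ κ).out | ρ t < ρ s} ≤ #Kt := by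
      rw [hKt]
      have hsub : {t : (Order.succ κ).out | ρ t < ρ s} ⊆ {t : (Order.succ κ).out | ρ t ≤ ρ s} :=
        fun t ht => show ρ t ≤ ρ s from le_of_lt ht
      exact (Cardinal.mk_le_mk_of_subset hsub).trans (seg s)
    obtain ⟨e⟩ := (Cardinal.le_def _ _).mp h1
    exact ⟨e, e.injective⟩
  choose e he using eex
  have hne : Nonempty Kt := Ordinal.nonempty_toType_iff.2 hlim.pos.ne'
  obtain ⟨i00⟩ := hne
  -- the sets D β
  let Dset : (Order.succ κ).out → Set (Order.succ κ).out := fun β => {s | ∃ h : ρ β < ρ s, τ (e s ⟨β, h⟩) < τ (i00)}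
  -- first: for every β get a bound ξ_β
  have Dex : ∀ β : (Order.succ κ).out, ∃ ξ < κ.ord, {s | ∃ h : ρ β < ρ s, τ (e s ⟨β, h⟩) < ξ} ∈ U := by
    intro β
    obtain ⟨ξ, hξ, hmem⟩ := T1 (fun s => if h : ρ β < ρ s then e s ⟨β, h⟩ else i00)
    refine ⟨ξ, hξ, ?_⟩
    have hsub : {s : (Order.succ κ).out | ρ s ≤ ρ β} ⊆ {t : (Order.succ κ).out | ρ t ≤ ρ β} := fun _ h => h
    have hsmall : {s : (Order.succ κ).out | ρ s ≤ ρ β} ∉ U := null _ (seg β)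
    have hbig : {s : (Order.succ κ).out | ρ β < ρ s} ∈ U := by
      have : {s : (Order.succ κ).out | ρ β < ρ s} = {s : (Order.succ κ).out | ρ s ≤ ρ β}ᶜ := by
        ext s; simp [not_le]
      rw [this]
      exact (Ultrafilter.compl_mem_iff_notMem).2 hsmall
    refine Filter.mem_of_superset (Filter.inter_mem hmem hbig) ?_
    rintro s ⟨h1, h2⟩
    refine ⟨h2, ?_⟩
    have h3 : τ ((fun s => if h : ρ β < ρ s then e s ⟨β, h⟩ else i00) s) < ξ := h1
    have h4 : (if h : ρ β < ρ s then e s ⟨β, h⟩ else i00) = e s ⟨β, h2⟩ := dif_pos h2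
    rw [← h4]
    exact h3
  choose ξv hξv hDU using Dex
  -- pigeonhole: some value τ i* is attained κ-many times
  have pig : ∃ i : Kt, κ ≤ #{β : (Order.succ κ).out | ξv β = τ i} := by
    by_contra hno
    push_neg at hno
    have hcover : (Set.univ : Set (Order.succ κ).out) = ⋃ i : Kt, {β : (Order.succ κ).out | ξv β = τ i} := by
      ext β
      simp only [mem_univ, true_iff, mem_iUnion, mem_setOf_eq]
      obtain ⟨i, hi⟩ := hτsurj (ξv β) (hξv β)
      exact ⟨i, hi.symm⟩
    have h1 : #(Set.univ : Set (Order.succ κ).out) ≤ κ := by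
      rw [hcover]
      calc #(⋃ i : Kt, {β : (Order.succ κ).out | ξv β = τ i})
          ≤ #Kt * ⨆ i : Kt, #{β : (Order.succ κ).out | ξv β = τ i} := Cardinal.mk_iUnion_le _
        _ ≤ κ * κ := by
            rw [hKt]
            exact mul_le_mul_right (ciSup_le' fun i => (hno i).le) κ
        _ = κ := Cardinal.mul_eq_self hℵ
    rw [Cardinal.mk_univ, hS] at h1
    exact (Order.lt_succ κ).not_ge h1
  obtain ⟨istar, histar⟩ := pig
  obtain ⟨B⟩ : Nonempty (Kt ↪ ↥{β : (Order.succ κ).out | ξv β = τ istar}) := by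
    exact (Cardinal.le_def _ _).mp (hKt.trans_le histar)
  -- the small sets s_α
  let DB : Kt → Set (Order.succ κ).out := fun i => {s | ∃ h : ρ (B i).1 < ρ s, τ (e s ⟨(B i).1, h⟩) < ξv (B i).1}
  have hDBU : ∀ i, DB i ∈ U := fun i => hDU (B i).1
  let sα : (Order.succ κ).out → Set Kt := fun α => {i | α ∈ DB i}
  have hcard : ∀ α : (Order.succ κ).out, #(sα α) < κ := by
    intro α
    have hξs : τ istar < κ.ord := hτlt istar
    have key : ∀ i : ↥(sα α), ∃ h : ρ (B i.1).1 < ρ α,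
        τ (e α ⟨(B i.1).1, h⟩) < τ istar := by
      intro i
      have h1 : α ∈ DB i.1 := i.2
      obtain ⟨h, hb⟩ := h1
      refine ⟨h, ?_⟩
      have h2 : ξv (B i.1).1 = τ istar := (B i.1).2
      rwa [h2] at hb
    let j : ↥(sα α) → (τ istar).ToType := fun i =>
      (Ordinal.ToType.mk (o := τ istar)) ⟨τ (e α ⟨(B i.1).1, (key i).choose⟩), (key i).choose_spec⟩
    have hjinj : Function.Injective j := by
      intro i i' hj
      have h1 := ((Ordinal.ToType.mk (o := τ istar))).injective hj
      have h2 := congrArg Subtype.val h1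
      have h3 := hτinj h2
      have h4 := he α h3
      have h5 := congrArg Subtype.val h4
      have h6 : B i.1 = B i'.1 := Subtype.ext h5
      exact Subtype.ext (B.injective h6)
    have h7 : #(sα α) ≤ #(τ istar).ToType := Cardinal.mk_le_of_injective hjinj
    rw [Cardinal.mk_toType] at h7
    exact h7.trans_lt (Cardinal.lt_ord.mp hξs)
  -- the unbounded function g
  have hG : ∀ α : (Order.succ κ).out, (⨆ i : ↥(sα α), τ i.1 + 1) < κ.ord := fun α =>
    Cardinal.iSup_lt_ord_of_isRegular hκ (hcard α) fun i => hsucclt (hτlt _)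
  let g : (Order.succ κ).out → Kt := fun α => σ ⟨_, hG α⟩
  have hg : ∀ α, τ (g α) = ⨆ i : ↥(sα α), τ i.1 + 1 := by
    intro α
    show ((σ.symm (σ ⟨_, hG α⟩)) : Ordinal) = _
    rw [OrderIso.symm_apply_apply]
  obtain ⟨ζ, hζ, hC⟩ := T1 g
  obtain ⟨i0, hi0⟩ := hτsurj ζ hζ
  have hmem : ({s | τ (g s) < ζ} ∩ DB i0).Nonempty :=
    Ultrafilter.nonempty_of_mem (Filter.inter_mem hC (hDBU i0))
  obtain ⟨α, hα1, hα2⟩ := hmem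
  have hi0s : i0 ∈ sα α := hα2
  have h1 : τ i0 + 1 ≤ τ (g α) := by
    rw [hg]
    exact Ordinal.le_iSup (fun i : ↥(sα α) => τ i.1 + 1) ⟨i0, hi0s⟩
  have h2 : ζ < τ (g α) := lt_of_lt_of_le (hi0 ▸ lt_add_one (τ i0)) h1
  exact absurd hα1 (not_lt.2 h2.le)
end

section
/- Let λ < κ be cardinals and U a λ-decomposable ultrafilter over κ. Then the ultrafilter number u(λ) is at most the character χ(U). -/
/-! The map witnessing `λ`-decomposability pushes `U` forward to a uniform ultrafilter on `λ`,
and the image of a base of `U` is a base of the pushforward of no larger size. -/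

open Cardinal Set

universe u v

section Character

variable {α β : Type u}

theorem charU_le_mk_of_base (U : Ultrafilter α) (B : Set (Set α)) (hBU : ∀ X ∈ B, X ∈ U)
    (hB : ∀ Y ∈ U, ∃ X ∈ B, X ⊆ Y) : charU U ≤ #B :=
  csInf_le' ⟨B, rfl, hBU, hB⟩

theorem exists_base_mk_eq_charU (U : Ultrafilter α) :
    ∃ B : Set (Set α), #B = charU U ∧ (∀ X ∈ B, X ∈ U) ∧ ∀ Y ∈ U, ∃ X ∈ B, X ⊆ Y :=
  csInf_mem (s := {c | ∃ B : Set (Set α), #B = c ∧ (∀ X ∈ B, X ∈ U) ∧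
      ∀ Y ∈ U, ∃ X ∈ B, X ⊆ Y})
    ⟨_, {X | X ∈ U}, rfl, fun _ hX => hX, fun Y hY => ⟨Y, hY, subset_rfl⟩⟩

theorem charU_map_le (U : Ultrafilter α) (f : α → β) : charU (U.map f) ≤ charU U := by
  obtain ⟨B, hBcard, hBU, hB⟩ := exists_base_mk_eq_charU U
  have hmem : ∀ Y ∈ image f '' B, Y ∈ U.map f := by
    rintro _ ⟨X, hX, rfl⟩
    exact Ultrafilter.mem_map.mpr (Filter.mem_of_superset (hBU X hX) (subset_preimage_image f X))
  have hbase : ∀ Y ∈ U.map f, ∃ X ∈ image f '' B, X ⊆ Y := by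
    intro Y hY
    obtain ⟨X, hX, hXY⟩ := hB (f ⁻¹' Y) (Ultrafilter.mem_map.mp hY)
    exact ⟨f '' X, mem_image_of_mem _ hX, image_subset_iff.mpr hXY⟩
  calc charU (U.map f) ≤ #(image f '' B) := charU_le_mk_of_base _ _ hmem hbase
    _ ≤ #B := mk_image_le
    _ = charU U := hBcard

end Character

theorem uniform_map_of_preimage_notMem {α : Type u} {β : Type v} (U : Ultrafilter α)
    (f : α → β) (hf : ∀ X : Set β, #X < #β → f ⁻¹' X ∉ U) : Uniform (U.map f) :=
  fun X hX => le_antisymm (mk_set_le X)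
    (le_of_not_gt fun hlt => hf X hlt (Ultrafilter.mem_map.mp hX))

theorem uNumber_le_charU {l : Cardinal.{u}} (V : Ultrafilter l.out) (hV : Uniform V) :
    uNumber l ≤ charU V :=
  csInf_le' ⟨V, hV, rfl⟩

theorem stmt6_general (l κ : Cardinal.{u}) (U : Ultrafilter κ.out)
    (hd : Decomposable U l) : uNumber l ≤ charU U := by
  obtain ⟨f, hf⟩ := hd
  have hVuniform : Uniform (U.map f) :=
    uniform_map_of_preimage_notMem U f fun X hX => hf X (by rwa [mk_out] at hX)
  exact (uNumber_le_charU _ hVuniform).trans (charU_map_le U f)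

/-- If `λ < κ` and `U` is a `λ`-decomposable ultrafilter over `κ`,
then `u(λ) ≤ χ(U)`. -/
theorem stmt6 (l κ : Cardinal.{u}) (h : l < κ) (U : Ultrafilter κ.out)
    (hd : Decomposable U l) : uNumber l ≤ charU U :=
  stmt6_general l κ U hd
end

section
/- Let κ be a cardinal and suppose κ carries a σ-complete uniform ultrafilter U with χ(U) = u(κ). Then there is a uniform ultrafilter V over κ with χ(V) = u(κ) such that V is not σ-complete. -/
open Cardinal Set

universe u v

/-- An ultrafilter is σ-complete if it is closed under countable intersections. -/
def SigmaComplete {α : Type u} (U : Ultrafilter α) : Prop :=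
  ∀ A : ℕ → Set α, (∀ n, A n ∈ U) → (⋂ n, A n) ∈ U

/-- a σ-complete ultrafilter on a set injecting into Cantor space is principal -/
lemma sigma_principal {ι : Type u} (D : Ultrafilter ι) (hD : SigmaComplete D)
    (h : ι → ℕ → Bool) (hinj : Function.Injective h) : ∃ i, {i} ∈ D := by
  classical
  set A : ℕ → Set ι := fun n =>
    if {i | h i n = true} ∈ D then {i | h i n = true} else {i | h i n = false} with hA
  have hAD : ∀ n, A n ∈ D := by
    intro n
    by_cases hn : {i | h i n = true} ∈ D
    · simpa [hA, hn]
    · have : {i | h i n = true}ᶜ ∈ D := Ultrafilter.compl_mem_iff_notMem.2 hn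
      have : {i | h i n = false} ∈ D := by
        convert this using 1
        ext i; simp [Set.mem_compl_iff]
      simpa [hA, hn]
  have hmem : (⋂ n, A n) ∈ D := hD A hAD
  obtain ⟨i₀, hi₀⟩ := Ultrafilter.nonempty_of_mem hmem
  refine ⟨i₀, Filter.mem_of_superset hmem ?_⟩
  intro j hj
  have : h j = h i₀ := by
    funext n
    have hj' := Set.mem_iInter.1 hj n
    have hi' := Set.mem_iInter.1 hi₀ n
    by_cases hn : {i | h i n = true} ∈ D
    · simp only [hA, if_pos hn, Set.mem_setOf_eq] at hj' hi'
      rw [hj', hi']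
    · simp only [hA, if_neg hn, Set.mem_setOf_eq] at hj' hi'
      rw [hj', hi']
  exact hinj this

lemma sigma_complete_iInter {S ι : Type u} (U : Ultrafilter S) (hσ : SigmaComplete U)
    (h : ι → ℕ → Bool) (hinj : Function.Injective h)
    (f : ι → Set S) (hf : ∀ i, f i ∈ U) : (⋂ i, f i) ∈ U := by
  classical
  by_contra hcon
  have hne : Nonempty ι := by
    by_contra hemp
    rw [not_nonempty_iff] at hemp
    simp [Set.iInter_of_empty] at hcon
    exact hcon Filter.univ_mem
  set g : S → ι := fun x => if hx : ∃ i, x ∉ f i then hx.choose else Classical.arbitrary ι with hg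
  set D : Ultrafilter ι := U.map g with hDdef
  have hDσ : SigmaComplete D := by
    intro A hA
    have : ∀ n, g ⁻¹' (A n) ∈ U := hA
    have : g ⁻¹' (⋂ n, A n) ∈ U := by
      rw [Set.preimage_iInter]; exact hσ _ this
    exact this
  obtain ⟨i₀, hi₀⟩ := sigma_principal D hDσ h hinj
  have hpre : g ⁻¹' {i₀} ∈ U := hi₀
  have hsub : g ⁻¹' {i₀} ⊆ (f i₀)ᶜ ∪ ⋂ i, f i := by
    intro x hx
    by_cases hxi : x ∈ ⋂ i, f i
    · exact Or.inr hxi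
    · left
      have hex : ∃ i, x ∉ f i := by
        rw [Set.mem_iInter] at hxi; push_neg at hxi; exact hxi
      have : g x = hex.choose := by simp [hg, dif_pos hex]
      have hgx : x ∉ f (g x) := this ▸ hex.choose_spec
      have : g x = i₀ := hx
      rwa [this] at hgx
  have : (f i₀)ᶜ ∪ ⋂ i, f i ∈ U := Filter.mem_of_superset hpre hsub
  rcases (Ultrafilter.union_mem_iff.1 this) with h1 | h1
  · exact (Ultrafilter.compl_mem_iff_notMem.1 h1) (hf i₀)
  · exact hcon h1

lemma charU_mem {α : Type u} (U : Ultrafilter α) :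
    ∃ B : Set (Set α), #B = charU U ∧ (∀ X ∈ B, X ∈ U) ∧ ∀ Y ∈ U, ∃ X ∈ B, X ⊆ Y := by
  have hne : {c | ∃ B : Set (Set α), #B = c ∧ (∀ X ∈ B, X ∈ U) ∧ ∀ Y ∈ U, ∃ X ∈ B, X ⊆ Y}.Nonempty :=
    ⟨#{X | X ∈ U}, {X | X ∈ U}, rfl, fun _ h => h, fun Y hY => ⟨Y, hY, subset_rfl⟩⟩
  exact csInf_mem hne

lemma two_power_le_charU {S : Type u} (U : Ultrafilter S) (hσ : SigmaComplete U)
    (hnp : ∀ a : S, {a} ∉ U) : (2 : Cardinal.{u}) ^ (ℵ₀ : Cardinal.{u}) ≤ charU U := by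
  obtain ⟨B₀, hcard, hBU, hbase⟩ := charU_mem U
  by_contra hlt
  push_neg at hlt
  have hle : #B₀ ≤ (2 : Cardinal.{u}) ^ (ℵ₀ : Cardinal.{u}) := hcard ▸ hlt.le
  rw [show (2 : Cardinal.{u}) ^ (ℵ₀ : Cardinal.{u}) = #(ULift.{u} (ℕ → Bool)) by
    simp [Cardinal.mk_uLift, Cardinal.mk_arrow]] at hle
  obtain ⟨emb⟩ := (Cardinal.le_def _ _).1 hle
  have hinj : Function.Injective (fun b : B₀ => (emb b).down) :=
    fun a b hab => emb.injective (ULift.down_injective hab)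
  have hint : (⋂ b : B₀, (b : Set S)) ∈ U :=
    sigma_complete_iInter U hσ (fun b : B₀ => (emb b).down) hinj _ (fun b => hBU b b.2)
  obtain ⟨x, hx⟩ := Ultrafilter.nonempty_of_mem hint
  have hxc : ({x} : Set S)ᶜ ∈ U := Ultrafilter.compl_mem_iff_notMem.2 (hnp x)
  obtain ⟨c, hc, hcsub⟩ := hbase _ hxc
  have : x ∈ c := Set.mem_iInter.1 hx ⟨c, hc⟩
  exact hcsub this rfl

/-- If `κ` carries a σ-complete uniform ultrafilter of minimal character,
it carries a non-σ-complete uniform ultrafilter of the same character. -/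
theorem stmt13 (κ : Cardinal.{u}) (hκ : ℵ₀ ≤ κ) (U : Ultrafilter κ.out)
    (h1 : Uniform U) (h2 : SigmaComplete U) (h3 : charU U = uNumber κ) :
    ∃ V : Ultrafilter κ.out, Uniform V ∧ charU V = uNumber κ ∧ ¬ SigmaComplete V := by
  classical
  have hκ0 : #κ.out = κ := Cardinal.mk_out κ
  have hκ' : ℵ₀ ≤ #κ.out := by rw [hκ0]; exact hκ
  have hprod : #κ.out = #(ℕ × κ.out) := by
    rw [Cardinal.mk_prod]
    simp only [Cardinal.mk_nat, Cardinal.lift_aleph0, Cardinal.lift_id, Cardinal.lift_id']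
    exact (Cardinal.mul_eq_right hκ' hκ' Cardinal.aleph0_ne_zero).symm
  obtain ⟨e⟩ := Cardinal.eq.1 hprod
  set W : Ultrafilter ℕ := Filter.hyperfilter ℕ with hW
  set V : Ultrafilter κ.out := W.bind (fun n => U.map (fun x => e.symm (n, x))) with hVdef
  have hmemV : ∀ X : Set κ.out,
      X ∈ V ↔ {n : ℕ | {x : κ.out | e.symm (n, x) ∈ X} ∈ U} ∈ W := by
    intro X
    rw [hVdef]
    rw [show (X ∈ W.bind (fun n => U.map (fun x => e.symm (n, x)))) ↔
      {n : ℕ | X ∈ U.map (fun x => e.symm (n, x))} ∈ W from Filter.mem_bind']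
    simp only [Ultrafilter.mem_map]
    rfl
  have hnpU : ∀ a : κ.out, {a} ∉ U := by
    intro a ha
    have := h1 _ ha
    rw [Cardinal.mk_singleton] at this
    have : (1 : Cardinal.{u}) = κ := this.trans hκ0
    have := hκ.trans this.ge
    exact absurd this (by simp [Cardinal.one_lt_aleph0.not_ge])
  -- uniformity of V
  have hVunif : Uniform V := by
    intro X hX
    rw [hmemV] at hX
    obtain ⟨n, hn⟩ := Ultrafilter.nonempty_of_mem hX
    have hT : #{x : κ.out | e.symm (n, x) ∈ X} = #κ.out := h1 _ hn
    refine le_antisymm (Cardinal.mk_set_le X) ?_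
    rw [← hT]
    refine Cardinal.mk_le_of_injective (f := fun t : {x : κ.out | e.symm (n, x) ∈ X} =>
      (⟨e.symm (n, t.1), t.2⟩ : X)) ?_
    intro a b hab
    have := congrArg Subtype.val hab
    simp only at this
    have := e.symm.injective this
    exact Subtype.ext (by injection this)
  -- character of V
  obtain ⟨B₀, hc0, hB0U, hB0base⟩ := charU_mem U
  have h2c : (2 : Cardinal.{u}) ^ (ℵ₀ : Cardinal.{u}) ≤ charU U := two_power_le_charU U h2 hnpU
  have hℵc : (ℵ₀ : Cardinal.{u}) ≤ charU U :=
    le_trans (le_of_lt (Cardinal.cantor ℵ₀)) h2c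
  set Wset : Set (Set ℕ) := {b | b ∈ W} with hWset
  set F : Wset × B₀ → Set κ.out := fun p => e ⁻¹' (p.1.1 ×ˢ p.2.1) with hF
  set C : Set (Set κ.out) := Set.range F with hC
  have hCV : ∀ X ∈ C, X ∈ V := by
    rintro X ⟨⟨⟨b, hb⟩, ⟨c, hc⟩⟩, rfl⟩
    rw [hmemV]
    refine Filter.mem_of_superset hb ?_
    intro n hn
    have : {x : κ.out | e.symm (n, x) ∈ F (⟨b, hb⟩, ⟨c, hc⟩)} = c := by
      ext x
      simp only [hF, Set.mem_setOf_eq, Set.mem_preimage, Equiv.apply_symm_apply,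
        Set.mem_prod]
      exact ⟨fun h => h.2, fun h => ⟨hn, h⟩⟩
    simp only [Set.mem_setOf_eq, this]
    exact hB0U c hc
  have hCbase : ∀ Y ∈ V, ∃ X ∈ C, X ⊆ Y := by
    intro Y hY
    rw [hmemV] at hY
    set b₀ : Set ℕ := {n : ℕ | {x : κ.out | e.symm (n, x) ∈ Y} ∈ U} with hb₀def
    set c₀ : Set κ.out := ⋂ n : ℕ, (if n ∈ b₀ then {x : κ.out | e.symm (n, x) ∈ Y} else Set.univ)
      with hc₀def
    have hc₀U : c₀ ∈ U := by
      refine h2 _ (fun n => ?_)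
      by_cases hn : n ∈ b₀
      · rw [if_pos hn]; exact hn
      · rw [if_neg hn]; exact Filter.univ_mem
    obtain ⟨c, hc, hcsub⟩ := hB0base _ hc₀U
    refine ⟨F (⟨b₀, hY⟩, ⟨c, hc⟩), ⟨_, rfl⟩, ?_⟩
    intro x hx
    simp only [hF, Set.mem_preimage, Set.mem_prod] at hx
    obtain ⟨hx1, hx2⟩ := hx
    have hxc₀ : (e x).2 ∈ c₀ := hcsub hx2
    have := Set.mem_iInter.1 hxc₀ (e x).1
    rw [if_pos hx1] at this
    simpa using this
  have hCcard : #C ≤ charU U := by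
    calc #C ≤ #(Wset × B₀) := Cardinal.mk_range_le
    _ = Cardinal.lift.{u} #Wset * Cardinal.lift.{0} #B₀ := by
        exact_mod_cast Cardinal.mk_prod (α := ↥Wset) (β := ↥B₀)
    _ ≤ Cardinal.lift.{u} #(Set ℕ) * Cardinal.lift.{0} #B₀ :=
        mul_le_mul_left (Cardinal.lift_le.mpr (Cardinal.mk_set_le _)) _
    _ = (2 : Cardinal.{u}) ^ (ℵ₀ : Cardinal.{u}) * charU U := by
        rw [Cardinal.mk_set, Cardinal.mk_nat]
        simp [Cardinal.lift_power, Cardinal.lift_aleph0, Cardinal.lift_id', hc0]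
    _ ≤ charU U * charU U := by gcongr
    _ = charU U := Cardinal.mul_eq_self hℵc
  have hVle : charU V ≤ charU U :=
    le_trans (csInf_le' ⟨C, rfl, hCV, hCbase⟩) hCcard
  have huV : uNumber κ ≤ charU V := csInf_le' ⟨V, hVunif, rfl⟩
  have hVchar : charU V = uNumber κ := le_antisymm (hVle.trans (le_of_eq h3)) huV
  -- non sigma-completeness
  refine ⟨V, hVunif, hVchar, ?_⟩
  intro hVσ
  set A : ℕ → Set κ.out := fun n => {x | n ≤ (e x).1} with hA
  have hAV : ∀ n, A n ∈ V := by
    intro n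
    rw [hmemV]
    refine Filter.mem_of_superset
      (Filter.mem_hyperfilter_of_finite_compl (s := {m : ℕ | n ≤ m}) ?_) ?_
    · have : {m : ℕ | n ≤ m}ᶜ = Set.Iio n := by
        ext m; simp [Set.mem_compl_iff, Nat.not_le]
      rw [this]; exact Set.finite_Iio n
    · intro m hm
      have : {x : κ.out | e.symm (m, x) ∈ A n} = Set.univ := by
        ext x
        simp only [hA, Set.mem_setOf_eq, Equiv.apply_symm_apply, Set.mem_univ, iff_true]
        exact hm
      simp only [Set.mem_setOf_eq, this]
      exact Filter.univ_mem
  have hAint : (⋂ n, A n) ∈ V := hVσ A hAV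
  have : (⋂ n, A n) = ∅ := by
    ext x
    simp only [Set.mem_iInter, Set.mem_empty_iff_false, iff_false, not_forall, hA,
      Set.mem_setOf_eq, not_le]
    exact ⟨(e x).1 + 1, Nat.lt_succ_self _⟩
  rw [this] at hAint
  exact Filter.empty_notMem _ hAint
end
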